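/- With T = [[1,1],[0,1]] and T' = [[1,0],[1,1]] in SL(2,ℤ), every matrix g ∈ SL(2,ℤ) with all entries nonnegative and g ≠ I can be written as g = T·h or g = T'·h for some matrix h ∈ SL(2,ℤ) with all entries nonnegative; consequently, the semigroup of nonnegative SL(2,ℤ)-matrices is freely generated by T and T'. -/

import Mathlib

/-! Left multiplication by `T⁻¹` (resp. `T'⁻¹`) subtracts the second row from the first (resp. the
first from the second). If `g ≠ I` is nonnegative of determinant one, then one of its rows dominates
the other entrywise, so one of these reductions keeps `g` nonnegative while strictly lowering the
sum of its entries; iterating writes `g` as a word in `T, T'`. Both reductions cannot keep `g`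
nonnegative at once (its rows would be equal, so its determinant would vanish), and neither can
when `g = I`, so the first letter of the word, and inductively the whole word, is determined. -/

def Tmat : Matrix.SpecialLinearGroup (Fin 2) ℤ := ⟨!![1, 1; 0, 1], by decide⟩

def Tmat' : Matrix.SpecialLinearGroup (Fin 2) ℤ := ⟨!![1, 0; 1, 1], by decide⟩

/-- The semigroup `S` of `SL(2,ℤ)`-matrices with nonnegative entries. -/
def Snn : Set (Matrix.SpecialLinearGroup (Fin 2) ℤ) := {g | ∀ i j, 0 ≤ g.1 i j}

open scoped MatrixGroups
open Matrix

namespace SL2Nonneg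

lemma det_eq_one {R : Type*} [CommRing R] (g : SL(2, R)) :
    g 0 0 * g 1 1 - g 0 1 * g 1 0 = 1 := by
  rw [← det_fin_two]
  exact g.det_coe

lemma mul_apply_fin_two {R : Type*} [CommRing R] (g h : SL(2, R)) (i j : Fin 2) :
    (g * h) i j = g i 0 * h 0 j + g i 1 * h 1 j := by
  simp [mul_apply, Fin.sum_univ_two]

@[simp] lemma Tmat_mul_apply_zero (h : SL(2, ℤ)) (j : Fin 2) : (Tmat * h) 0 j = h 0 j + h 1 j := by
  rw [mul_apply_fin_two]; simp [Tmat]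

@[simp] lemma Tmat_mul_apply_one (h : SL(2, ℤ)) (j : Fin 2) : (Tmat * h) 1 j = h 1 j := by
  rw [mul_apply_fin_two]; simp [Tmat]

@[simp] lemma Tmat'_mul_apply_zero (h : SL(2, ℤ)) (j : Fin 2) : (Tmat' * h) 0 j = h 0 j := by
  rw [mul_apply_fin_two]; simp [Tmat']

@[simp] lemma Tmat'_mul_apply_one (h : SL(2, ℤ)) (j : Fin 2) :
    (Tmat' * h) 1 j = h 0 j + h 1 j := by
  rw [mul_apply_fin_two]; simp [Tmat']

lemma one_mem_Snn : (1 : SL(2, ℤ)) ∈ Snn := by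
  intro i j
  fin_cases i <;> fin_cases j <;> simp

lemma Tmat_mem_Snn : Tmat ∈ Snn := by
  intro i j
  fin_cases i <;> fin_cases j <;> simp [Tmat]

lemma Tmat'_mem_Snn : Tmat' ∈ Snn := by
  intro i j
  fin_cases i <;> fin_cases j <;> simp [Tmat']

lemma mul_mem_Snn {g h : SL(2, ℤ)} (hg : g ∈ Snn) (hh : h ∈ Snn) : g * h ∈ Snn := by
  intro i j
  rw [mul_apply_fin_two]
  have := hg i 0; have := hg i 1; have := hh 0 j; have := hh 1 j
  positivity

lemma Tmat_inv_mul_mem_Snn_iff {g : SL(2, ℤ)} (hg : g ∈ Snn) :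
    Tmat⁻¹ * g ∈ Snn ↔ ∀ j, g 1 j ≤ g 0 j := by
  obtain ⟨h, rfl⟩ : ∃ h, g = Tmat * h := ⟨Tmat⁻¹ * g, by simp⟩
  simp only [inv_mul_cancel_left, Tmat_mul_apply_zero, Tmat_mul_apply_one, le_add_iff_nonneg_left]
  refine ⟨fun hh j => hh 0 j, fun hle i j => ?_⟩
  fin_cases i
  · exact hle j
  · simpa using hg 1 j

lemma Tmat'_inv_mul_mem_Snn_iff {g : SL(2, ℤ)} (hg : g ∈ Snn) :
    Tmat'⁻¹ * g ∈ Snn ↔ ∀ j, g 0 j ≤ g 1 j := by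
  obtain ⟨h, rfl⟩ : ∃ h, g = Tmat' * h := ⟨Tmat'⁻¹ * g, by simp⟩
  simp only [inv_mul_cancel_left, Tmat'_mul_apply_zero, Tmat'_mul_apply_one,
    le_add_iff_nonneg_right]
  refine ⟨fun hh j => hh 1 j, fun hle i j => ?_⟩
  fin_cases i
  · simpa using hg 0 j
  · exact hle j

lemma row_sum_pos {h : SL(2, ℤ)} (hh : h ∈ Snn) (i : Fin 2) : 0 < h i 0 + h i 1 := by
  have hdet := det_eq_one h
  have := hh 0 0; have := hh 0 1; have := hh 1 0; have := hh 1 1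
  revert i
  rw [Fin.forall_fin_two]
  constructor <;> by_contra! hle <;> nlinarith

lemma eq_one_of_lt_of_lt {g : SL(2, ℤ)} (hg : g ∈ Snn) (h₀ : g 1 0 < g 0 0)
    (h₁ : g 0 1 < g 1 1) : g = 1 := by
  have hdet := det_eq_one g
  have := hg 0 1; have := hg 1 0
  -- over `ℤ`, `g 0 0 ≥ g 1 0 + 1` and `g 1 1 ≥ g 0 1 + 1` give `1 ≥ g 0 1 + g 1 0 + 1`
  have hb : g 0 1 = 0 := by nlinarith
  have hc : g 1 0 = 0 := by nlinarith
  rw [hb, hc] at hdet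
  have ha : g 0 0 = 1 := Int.eq_one_of_mul_eq_one_right (hg 0 0) (by linarith)
  have hd : g 1 1 = 1 := Int.eq_one_of_mul_eq_one_left (hg 1 1) (a := g 0 0) (by linarith)
  ext i j
  fin_cases i <;> fin_cases j <;> simp [ha, hb, hc, hd]

lemma rows_le_or_ge {g : SL(2, ℤ)} (hg : g ∈ Snn) (hne : g ≠ 1) :
    (∀ j, g 1 j ≤ g 0 j) ∨ ∀ j, g 0 j ≤ g 1 j := by
  simp only [Fin.forall_fin_two]
  have hdet := det_eq_one g
  have := hg 0 0; have := hg 0 1; have := hg 1 0; have := hg 1 1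
  rcases le_or_gt (g 1 0) (g 0 0) with h₀ | h₀ <;>
    rcases le_or_gt (g 1 1) (g 0 1) with h₁ | h₁
  · exact .inl ⟨h₀, h₁⟩
  · exact .inr ⟨not_lt.1 fun h₀' => hne (eq_one_of_lt_of_lt hg h₀' h₁), h₁.le⟩
  · refine .inr ⟨h₀.le, not_lt.1 fun h₁' => ?_⟩
    nlinarith
  · exact .inr ⟨h₀.le, h₁.le⟩

lemma Tmat_mul_ne_Tmat'_mul {h h' : SL(2, ℤ)} (hh : h ∈ Snn) (hh' : h' ∈ Snn) :
    Tmat * h ≠ Tmat' * h' := by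
  intro he
  have hg : Tmat * h ∈ Snn := mul_mem_Snn Tmat_mem_Snn hh
  have hle := (Tmat_inv_mul_mem_Snn_iff hg).1 (by simpa using hh)
  have hge := (Tmat'_inv_mul_mem_Snn_iff hg).1 (by simpa [he] using hh')
  have hdet := det_eq_one (Tmat * h)
  rw [le_antisymm (hle 0) (hge 0), le_antisymm (hle 1) (hge 1)] at hdet
  linarith

def generator (b : Bool) : SL(2, ℤ) := if b then Tmat else Tmat'

lemma generator_mem_Snn (b : Bool) : generator b ∈ Snn := by
  cases b
  exacts [Tmat'_mem_Snn, Tmat_mem_Snn]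

lemma exists_generator_mul_eq {g : SL(2, ℤ)} (hg : g ∈ Snn) (hne : g ≠ 1) :
    ∃ b, ∃ h ∈ Snn, generator b * h = g := by
  rcases rows_le_or_ge hg hne with hle | hle
  · exact ⟨true, Tmat⁻¹ * g, (Tmat_inv_mul_mem_Snn_iff hg).2 hle, mul_inv_cancel_left _ _⟩
  · exact ⟨false, Tmat'⁻¹ * g, (Tmat'_inv_mul_mem_Snn_iff hg).2 hle, mul_inv_cancel_left _ _⟩

lemma generator_mul_ne_one (b : Bool) {h : SL(2, ℤ)} (hh : h ∈ Snn) : generator b * h ≠ 1 := by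
  intro h1
  obtain rfl := eq_inv_of_mul_eq_one_right h1
  rw [← mul_one (generator b)⁻¹] at hh
  cases b
  · simpa using (Tmat'_inv_mul_mem_Snn_iff one_mem_Snn).1 hh 0
  · simpa using (Tmat_inv_mul_mem_Snn_iff one_mem_Snn).1 hh 1

lemma eq_of_generator_mul_eq {b b' : Bool} {h h' : SL(2, ℤ)} (hh : h ∈ Snn) (hh' : h' ∈ Snn)
    (he : generator b * h = generator b' * h') : b = b' := by
  cases b <;> cases b'
  all_goals first
    | rfl
    | exact absurd he (Tmat_mul_ne_Tmat'_mul hh hh')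
    | exact absurd he.symm (Tmat_mul_ne_Tmat'_mul hh' hh)

def entrySum (g : SL(2, ℤ)) : ℤ := ∑ i, ∑ j, g i j

lemma entrySum_nonneg {g : SL(2, ℤ)} (hg : g ∈ Snn) : 0 ≤ entrySum g :=
  Finset.sum_nonneg fun i _ => Finset.sum_nonneg fun j _ => hg i j

lemma entrySum_lt_generator_mul (b : Bool) {h : SL(2, ℤ)} (hh : h ∈ Snn) :
    entrySum h < entrySum (generator b * h) := by
  have := row_sum_pos hh 0; have := row_sum_pos hh 1
  cases b <;> simp only [entrySum, generator, Fin.sum_univ_two, Bool.false_eq_true, if_true,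
    if_false, Tmat_mul_apply_zero, Tmat_mul_apply_one, Tmat'_mul_apply_zero,
    Tmat'_mul_apply_one] <;> linarith

def wordProd (w : List Bool) : SL(2, ℤ) := (w.map generator).prod

@[simp] lemma wordProd_nil : wordProd [] = 1 := rfl

@[simp] lemma wordProd_cons (b : Bool) (w : List Bool) :
    wordProd (b :: w) = generator b * wordProd w := by
  simp [wordProd]

lemma wordProd_mem_Snn (w : List Bool) : wordProd w ∈ Snn := by
  induction w with
  | nil => exact one_mem_Snn
  | cons b w ih => simpa using mul_mem_Snn (generator_mem_Snn b) ih

lemma exists_wordProd_eq {g : SL(2, ℤ)} (hg : g ∈ Snn) : ∃ w, wordProd w = g := by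
  induction hn : (entrySum g).toNat using Nat.strong_induction_on generalizing g with
  | _ n ih =>
  by_cases hg1 : g = 1
  · exact ⟨[], hg1.symm⟩
  obtain ⟨b, h, hh, rfl⟩ := exists_generator_mul_eq hg hg1
  have := entrySum_lt_generator_mul b hh
  have := entrySum_nonneg hh
  obtain ⟨w, rfl⟩ := ih _ (by omega) hh rfl
  exact ⟨b :: w, wordProd_cons b w⟩

lemma wordProd_injective : Function.Injective wordProd := by
  intro w₁
  induction w₁ with
  | nil =>
    rintro (_ | ⟨b, w₂⟩) he
    · rfl
    · exact absurd he.symm (by simpa using generator_mul_ne_one b (wordProd_mem_Snn w₂))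
  | cons b₁ w₁ ih =>
    rintro (_ | ⟨b₂, w₂⟩) he
    · exact absurd he (by simpa using generator_mul_ne_one b₁ (wordProd_mem_Snn w₁))
    · rw [wordProd_cons, wordProd_cons] at he
      obtain rfl := eq_of_generator_mul_eq (wordProd_mem_Snn w₁) (wordProd_mem_Snn w₂) he
      rw [ih (mul_left_cancel he)]

end SL2Nonneg

/-- every `g ∈ S`, `g ≠ I`, is `T·h` or `T'·h` with `h ∈ S`;
consequently `S` is freely generated by `T` and `T'`: every element of `S` is
the product of a unique word in `T, T'`. -/
theorem stmt13 :
    (∀ g ∈ Snn, g ≠ 1 →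
      ∃ h ∈ Snn, g = Tmat * h ∨ g = Tmat' * h) ∧
    (∀ g ∈ Snn, ∃! w : List Bool,
      g = (w.map (fun x => if x then Tmat else Tmat')).prod) := by
  refine ⟨fun g hg hne => ?_, fun g hg => ?_⟩
  · obtain ⟨b, h, hh, rfl⟩ := SL2Nonneg.exists_generator_mul_eq hg hne
    cases b
    exacts [⟨h, hh, .inr rfl⟩, ⟨h, hh, .inl rfl⟩]
  · obtain ⟨w, rfl⟩ := SL2Nonneg.exists_wordProd_eq hg
    exact ⟨w, rfl, fun w' hw' => SL2Nonneg.wordProd_injective hw'.symm⟩
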